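/- arXiv:1806.00721 — 2 statements merged into one kernel-verified Lean document; each statement's English description precedes it below -/
import Mathlib

section
/- Let U be a (G,H)-biset, V an (H,K)-biset, with U × V viewed as an H-set via h·(u,v) = (uh⁻¹, hv), and let [u,v] denote the H-orbit of (u,v) in U ×_H V. Then the stabilizer of [u,v] in G × K equals the star product of the stabilizers: (G × K)_{[u,v]} = (G × H)_u * (H × K)_v. -/
/-- The star product `D * E := {(g,k) | ∃ h, (g,h) ∈ D ∧ (h,k) ∈ E}`. -/
def starSub {G H K : Type*} [Group G] [Group H] [Group K]
    (D : Subgroup (G × H)) (E : Subgroup (H × K)) : Subgroup (G × K) where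
  carrier := {p | ∃ h : H, (p.1, h) ∈ D ∧ (h, p.2) ∈ E}
  one_mem' := ⟨1, D.one_mem, E.one_mem⟩
  mul_mem' := fun ⟨h, hD, hE⟩ ⟨h', hD', hE'⟩ =>
    ⟨h * h', D.mul_mem hD hD', E.mul_mem hE hE'⟩
  inv_mem' := fun ⟨h, hD, hE⟩ => ⟨h⁻¹, D.inv_mem hD, E.inv_mem hE⟩

section Tensor

variable (G H K : Type*) [Group G] [Group H] [Group K]
variable (U V : Type*) [MulAction (G × H) U] [MulAction (H × K) V]

/-- The setoid on `U × V` whose classes are the `H`-orbits for `h • (u,v) = (u h⁻¹, h v)`;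
here a `(G,H)`-biset `U` is encoded as a `(G × H)`-set via `(g,h) • u = g u h⁻¹`, so that
`u h⁻¹ = (1,h) • u` and `h v = (h,1) • v`. -/
def tensorSetoid : Setoid (U × V) where
  r p q := ∃ h : H, p.1 = ((1, h) : G × H) • q.1 ∧ p.2 = ((h, 1) : H × K) • q.2
  iseqv := by
    constructor
    · intro p
      exact ⟨1, by simp [Prod.mk_one_one], by simp [Prod.mk_one_one]⟩
    · rintro p q ⟨h, h1, h2⟩
      refine ⟨h⁻¹, ?_, ?_⟩ <;>
        simp [h1, h2, smul_smul, Prod.mk_mul_mk, Prod.mk_one_one]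
    · rintro p q r ⟨h, h1, h2⟩ ⟨h', h1', h2'⟩
      refine ⟨h * h', ?_, ?_⟩ <;>
        simp [h1, h2, h1', h2', smul_smul, Prod.mk_mul_mk]

/-- The biset tensor product `U ×_H V`: the set of `H`-orbits of `U × V`. -/
def Tensor : Type _ := Quotient (tensorSetoid G H K U V)

/-- The class `[u, v] ∈ U ×_H V`. -/
def tmk (p : U × V) : Tensor G H K U V := Quotient.mk (tensorSetoid G H K U V) p

/-- The `(G,K)`-biset structure on `U ×_H V`, i.e. the `(G × K)`-action
`(g,k) • [u,v] = [g u, v k⁻¹] = [(g,1) • u, (1,k) • v]`. -/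
instance : MulAction (G × K) (Tensor G H K U V) where
  smul a := Quotient.map
    (fun p => (((a.1, 1) : G × H) • p.1, ((1, a.2) : H × K) • p.2))
    (by
      rintro p q ⟨h, h1, h2⟩
      exact ⟨h, by simp [h1, smul_smul, Prod.mk_mul_mk],
        by simp [h2, smul_smul, Prod.mk_mul_mk]⟩)
  one_smul := by
    intro x
    induction x using Quotient.ind
    refine congrArg (Quotient.mk _) ?_
    simp [Prod.mk_one_one]
  mul_smul := by
    intro a b x
    induction x using Quotient.ind
    refine congrArg (Quotient.mk _) ?_
    simp [smul_smul, Prod.mk_mul_mk]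

variable {G H K U V}

theorem mem_starSub {D : Subgroup (G × H)} {E : Subgroup (H × K)} {g : G} {k : K} :
    (g, k) ∈ starSub D E ↔ ∃ h : H, (g, h) ∈ D ∧ (h, k) ∈ E :=
  Iff.rfl

theorem MulAction.smul_eq_smul_iff_inv_mul_mem_stabilizer {M α : Type*} [Group M]
    [MulAction M α] (a b : M) (x : α) : a • x = b • x ↔ b⁻¹ * a ∈ stabilizer M x := by
  rw [mem_stabilizer_iff, mul_smul, inv_smul_eq_iff]

theorem smul_tmk (g : G) (k : K) (u : U) (v : V) :
    (g, k) • tmk G H K U V (u, v) = tmk G H K U V (((g, 1) : G × H) • u, ((1, k) : H × K) • v) :=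
  rfl

theorem tmk_eq_tmk_iff {u u' : U} {v v' : V} :
    tmk G H K U V (u, v) = tmk G H K U V (u', v') ↔
      ∃ h : H, u = ((1, h) : G × H) • u' ∧ v = ((h, 1) : H × K) • v' :=
  Quotient.eq

variable (G H K U V)

theorem stabilizer_tmk (u : U) (v : V) :
    MulAction.stabilizer (G × K) (tmk G H K U V (u, v)) =
      starSub (MulAction.stabilizer (G × H) u) (MulAction.stabilizer (H × K) v) := by
  ext ⟨g, k⟩
  rw [MulAction.mem_stabilizer_iff, smul_tmk, tmk_eq_tmk_iff, mem_starSub]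
  simp only [MulAction.smul_eq_smul_iff_inv_mul_mem_stabilizer, Prod.inv_mk, Prod.mk_mul_mk,
    inv_one, one_mul, mul_one]
  -- a witness `h` of `[g u, v k⁻¹] = [u, v]` gives the middle coordinate `h⁻¹` of the star product
  exact (inv_surjective.exists (p := fun h : H => (g, h) ∈ _ ∧ (h, k) ∈ _)).symm

end Tensor
end

section
/- With n_{F,G}((a_H)_H) := Σ_{L,K ∈ Σ_𝒢(G)} |L| μ(L,K) [L, res^K_L(a_K)] and m_{F,G} the mark morphism sending [X,s] to the tuple whose L-component is Σ_{x ∈ X, L ≤ G_x} res^{G_x}_L(s(x)), one has n_{F,G} ∘ m_{F,G} = |G| · id on F₊(G). Here μ is the Möbius function of the poset Σ_𝒢(G) ordered by inclusion. The key computation is that for the resulting expression, the inner sum Σ_{K: L ≤ K ≤ G_x} μ(L,K) equals 1 if L = G_x and 0 otherwise, giving Σ_{x ∈ X} |G_x| [G_x, s(x)]_G = |G| [X,s]. -/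
open scoped Classical DirectSum

/-- Conjugation of subgroups: `conjS g H = gHg⁻¹`. -/
def conjS {G : Type*} [Group G] (g : G) (H : Subgroup G) : Subgroup G :=
  H.map (MulAut.conj g).toMonoidHom

section

variable (R : Type*) [CommRing R] (G : Type*) [Group G]
  (𝒢 : Set (Subgroup G))
  (F : Subgroup G → Type*) [∀ H, AddCommGroup (F H)] [∀ H, Module R (F H)]

/-- The `R`-module `⊕_{H ∈ Σ_𝒢(G)} F(H)`. -/
abbrev BigSum : Type _ := ⨁ (H : 𝒢), F H.1

variable (c : ∀ (g : G) (H : Subgroup G), F H →ₗ[R] F (conjS g H))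
  (hconj : ∀ (g : G) (H : Subgroup G), H ∈ 𝒢 → conjS g H ∈ 𝒢)

/-- The action of `g ∈ G` on `⊕_{H ∈ Σ_𝒢(G)} F(H)`, sending `a ∈ F(H)` to `ᵍa ∈ F(ᵍH)`. -/
noncomputable def actMap (g : G) : BigSum G 𝒢 F →ₗ[R] BigSum G 𝒢 F :=
  DirectSum.toModule R 𝒢 (BigSum G 𝒢 F) fun H =>
    (DirectSum.lof R 𝒢 (fun H : 𝒢 => F H.1) ⟨conjS g H.1, hconj g H.1 H.2⟩).comp
      (c g H.1)

/-- The submodule of `⊕_H F(H)` spanned by the elements `g•m - m`; the quotient by it is the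
module of `G`-cofixed points (coinvariants). -/
noncomputable def AugSub : Submodule R (BigSum G 𝒢 F) :=
  Submodule.span R
    {m | ∃ (g : G) (y : BigSum G 𝒢 F), m = actMap R G 𝒢 F c hconj g y - y}

/-- `F₊(G) := (⊕_{H ∈ Σ_𝒢(G)} F(H))_G`, the `G`-cofixed points (coinvariants). -/
noncomputable abbrev Fplus : Type _ := BigSum G 𝒢 F ⧸ AugSub R G 𝒢 F c hconj

/-- The standard generator `[H,a]_G ∈ F₊(G)`. -/
noncomputable def brk (H : Subgroup G) (hH : H ∈ 𝒢) (a : F H) : Fplus R G 𝒢 F c hconj :=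
  Submodule.Quotient.mk (DirectSum.lof R 𝒢 (fun H : 𝒢 => F H.1) ⟨H, hH⟩ a)

/-- `F^+(G) := (∏_{H ∈ Σ_𝒢(G)} F(H))^G`, the `G`-fixed points (invariants). -/
def Fsup : Submodule R (∀ H : 𝒢, F H.1) where
  carrier := {f | ∀ (g : G) (H : 𝒢), f ⟨conjS g H.1, hconj g H.1 H.2⟩ = c g H.1 (f H)}
  add_mem' := by
    intro f f' hf hf' g H
    simp [hf g H, hf' g H]
  zero_mem' := by
    intro g H
    simp
  smul_mem' := by
    intro r f hf g H
    simp [hf g H]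

/-- `brk` as a linear map. -/
noncomputable def brkL (L : 𝒢) : F L.1 →ₗ[R] Fplus R G 𝒢 F c hconj :=
  (AugSub R G 𝒢 F c hconj).mkQ.comp (DirectSum.lof R 𝒢 (fun H : 𝒢 => F H.1) L)

lemma brk_eq_brkL (L : Subgroup G) (hL : L ∈ 𝒢) (a : F L) :
    brk R G 𝒢 F c hconj L hL a = brkL R G 𝒢 F c hconj ⟨L, hL⟩ a := rfl

lemma brk_conj (g : G) (H : Subgroup G) (hH : H ∈ 𝒢) (a : F H) :
    brk R G 𝒢 F c hconj (conjS g H) (hconj g H hH) (c g H a)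
      = brk R G 𝒢 F c hconj H hH a := by
  unfold brk
  rw [Submodule.Quotient.eq]
  refine Submodule.subset_span
    ⟨g, DirectSum.lof R 𝒢 (fun H : 𝒢 => F H.1) ⟨H, hH⟩ a, ?_⟩
  unfold actMap
  rw [DirectSum.toModule_lof]
  rfl

lemma card_conjS (g : G) (H : Subgroup G) : Nat.card (conjS g H) = Nat.card H :=
  (Nat.card_congr
    (H.equivMapOfInjective (MulAut.conj g).toMonoidHom
      (MulAut.conj g).injective).toEquiv).symm

lemma exists_transversal [Finite G] (H : Subgroup G) :
    ∃ T : Finset G, (∀ g : G, ∃! x, x ∈ T ∧ x⁻¹ * g ∈ H) ∧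
      T.card = Nat.card (G ⧸ H) := by
  haveI : Fintype (G ⧸ H) := Fintype.ofFinite _
  refine ⟨(Finset.univ : Finset (G ⧸ H)).image Quotient.out, ?_, ?_⟩
  · intro g
    refine ⟨(QuotientGroup.mk g : G ⧸ H).out,
      ⟨Finset.mem_image_of_mem _ (Finset.mem_univ _),
        QuotientGroup.eq.mp (QuotientGroup.out_eq' (QuotientGroup.mk g : G ⧸ H))⟩, ?_⟩
    rintro y ⟨hyT, hy⟩
    obtain ⟨q, -, rfl⟩ := Finset.mem_image.mp hyT
    have h1 : (QuotientGroup.mk q.out : G ⧸ H) = QuotientGroup.mk g :=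
      QuotientGroup.eq.mpr hy
    have h2 : q = QuotientGroup.mk g := by
      rw [← QuotientGroup.out_eq' q]; exact h1
    rw [h2]
  · rw [Finset.card_image_of_injective _ Quotient.out_injective, Finset.card_univ,
      Nat.card_eq_fintype_card]
    exact Fintype.card_congr (Equiv.refl _)

/-- Möbius inversion for the mark morphism.  Let `m : F₊(G) → F^+(G)` be the mark morphism,
whose `L`-component on `[H,a]_G` (the class of the `G`-set `G/H` with equivariant section
determined by `a`) is `Σ_{x ∈ [G/H], L ≤ ˣH} res^{ˣH}_L(ˣa)`, and let
`n((a_H)_H) := Σ_{L,K ∈ Σ_𝒢(G)} |L| μ(L,K) [L, res^K_L(a_K)]`, where `μ` is the Möbius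
function of the poset `Σ_𝒢(G)` ordered by inclusion.  Then `n ∘ m = |G| · id` on `F₊(G)`. -/

theorem n_comp_m_eq_card_smul [Finite G]
    (res : ∀ {L K : Subgroup G}, L ≤ K → (F K →ₗ[R] F L))
    (hres_refl : ∀ (H : Subgroup G) (a : F H), res le_rfl a = a)
    (hres_trans : ∀ {A B C : Subgroup G} (h1 : A ≤ B) (h2 : B ≤ C) (a : F C),
      res h1 (res h2 a) = res (h1.trans h2) a)
    (htop : (⊤ : Subgroup G) ∈ 𝒢)
    (μ : Subgroup G → Subgroup G → ℤ)
    (hμzero : ∀ L K : Subgroup G, ¬ L ≤ K → μ L K = 0)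
    (hμ : ∀ L K : Subgroup G, L ∈ 𝒢 → K ∈ 𝒢 → L ≤ K →
      (∑ᶠ J : 𝒢, if L ≤ J.1 ∧ J.1 ≤ K then μ L J.1 else 0) =
        if L = K then 1 else 0)
    (m : Fplus R G 𝒢 F c hconj →ₗ[R] ↥(Fsup R G 𝒢 F c hconj))
    (hm : ∀ (H : Subgroup G) (hH : H ∈ 𝒢) (a : F H) (L : 𝒢) (T : Finset G),
      (∀ g : G, ∃! x, x ∈ T ∧ x⁻¹ * g ∈ H) →
      ((m (brk R G 𝒢 F c hconj H hH a) : ∀ H : 𝒢, F H.1) L =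
        ∑ x ∈ T, if h : L.1 ≤ conjS x H then res h (c x H a) else 0))
    (n : ↥(Fsup R G 𝒢 F c hconj) →ₗ[R] Fplus R G 𝒢 F c hconj)
    (hn : ∀ f : ↥(Fsup R G 𝒢 F c hconj),
      n f = ∑ᶠ (L : 𝒢) (K : 𝒢),
        if h : L.1 ≤ K.1 then
          (Nat.card L.1 : ℤ) • (μ L.1 K.1 •
            brk R G 𝒢 F c hconj L.1 L.2 (res h ((f : ∀ H : 𝒢, F H.1) K)))
        else 0) :
    ∀ z : Fplus R G 𝒢 F c hconj, n (m z) = (Nat.card G : ℤ) • z := by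
  haveI : Fintype 𝒢 := Fintype.ofFinite _
  have key : ∀ (H : Subgroup G) (hH : H ∈ 𝒢) (a : F H),
      n (m (brk R G 𝒢 F c hconj H hH a))
        = (Nat.card G : ℤ) • brk R G 𝒢 F c hconj H hH a := by
    intro H hH a
    obtain ⟨T, hTmem, hTcard⟩ := exists_transversal (G := G) H
    have hmK : ∀ K : 𝒢, ((m (brk R G 𝒢 F c hconj H hH a) : ∀ H : 𝒢, F H.1) K) =
        ∑ x ∈ T, if h : K.1 ≤ conjS x H then res h (c x H a) else 0 :=
      fun K => hm H hH a K T hTmem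
    rw [hn]
    simp only [finsum_eq_sum_of_fintype]
    simp only [hmK]
    simp only [brk_eq_brkL]
    -- Step 1: expand into a triple sum
    have step1 : ∀ L K : 𝒢,
        (if h : L.1 ≤ K.1 then
          (Nat.card L.1 : ℤ) • (μ L.1 K.1 •
            brkL R G 𝒢 F c hconj ⟨L.1, L.2⟩
              (res h (∑ x ∈ T, if h2 : K.1 ≤ conjS x H then res h2 (c x H a) else 0)))
        else 0)
        = ∑ x ∈ T, if hc : L.1 ≤ K.1 ∧ K.1 ≤ conjS x H then
            μ L.1 K.1 • ((Nat.card L.1 : ℤ) •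
              brkL R G 𝒢 F c hconj ⟨L.1, L.2⟩ (res (hc.1.trans hc.2) (c x H a)))
          else 0 := by
      intro L K
      by_cases h : L.1 ≤ K.1
      · rw [dif_pos h, map_sum, map_sum, Finset.smul_sum, Finset.smul_sum]
        refine Finset.sum_congr rfl fun x _ => ?_
        by_cases h2 : K.1 ≤ conjS x H
        · rw [dif_pos h2, dif_pos ⟨h, h2⟩, hres_trans, smul_comm]
        · rw [dif_neg h2, dif_neg (fun hc => h2 hc.2)]
          simp
      · rw [dif_neg h]
        exact (Finset.sum_eq_zero fun x _ => dif_neg fun hc => h hc.1).symm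
    rw [Finset.sum_congr rfl fun L _ => Finset.sum_congr rfl fun K _ => step1 L K]
    -- Step 2: for each x and L, sum over K collapses via Möbius
    have step2 : ∀ (x : G) (L : 𝒢),
        (∑ K : 𝒢, if hc : L.1 ≤ K.1 ∧ K.1 ≤ conjS x H then
            μ L.1 K.1 • ((Nat.card L.1 : ℤ) •
              brkL R G 𝒢 F c hconj ⟨L.1, L.2⟩ (res (hc.1.trans hc.2) (c x H a)))
          else 0)
        = if he : L.1 = conjS x H then
            (Nat.card L.1 : ℤ) •
              brkL R G 𝒢 F c hconj ⟨L.1, L.2⟩ (res (le_of_eq he) (c x H a))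
          else 0 := by
      intro x L
      by_cases hLx : L.1 ≤ conjS x H
      · have hμs : (∑ K : 𝒢, if L.1 ≤ K.1 ∧ K.1 ≤ conjS x H then μ L.1 K.1 else 0)
            = if L.1 = conjS x H then 1 else 0 := by
          rw [← finsum_eq_sum_of_fintype]
          exact hμ L.1 (conjS x H) L.2 (hconj x H hH) hLx
        have hrw : (∑ K : 𝒢, if hc : L.1 ≤ K.1 ∧ K.1 ≤ conjS x H then
              μ L.1 K.1 • ((Nat.card L.1 : ℤ) •
                brkL R G 𝒢 F c hconj ⟨L.1, L.2⟩ (res (hc.1.trans hc.2) (c x H a)))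
            else 0)
            = (∑ K : 𝒢, if L.1 ≤ K.1 ∧ K.1 ≤ conjS x H then μ L.1 K.1 else 0) •
              ((Nat.card L.1 : ℤ) •
                brkL R G 𝒢 F c hconj ⟨L.1, L.2⟩ (res hLx (c x H a))) := by
          rw [Finset.sum_smul]
          refine Finset.sum_congr rfl fun K _ => ?_
          by_cases hc : L.1 ≤ K.1 ∧ K.1 ≤ conjS x H
          · rw [dif_pos hc, if_pos hc]
          · rw [dif_neg hc, if_neg hc, zero_smul]
        rw [hrw, hμs]
        by_cases he : L.1 = conjS x H
        · rw [if_pos he, dif_pos he, one_smul]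
        · rw [if_neg he, dif_neg he, zero_smul]
      · have he : ¬ L.1 = conjS x H := fun he => hLx (le_of_eq he)
        rw [dif_neg he]
        refine Finset.sum_eq_zero fun K _ => ?_
        rw [dif_neg (fun hc => hLx (hc.1.trans hc.2))]
    have stepA : ∀ L : 𝒢,
        (∑ K : 𝒢, ∑ x ∈ T, if hc : L.1 ≤ K.1 ∧ K.1 ≤ conjS x H then
            μ L.1 K.1 • ((Nat.card L.1 : ℤ) •
              brkL R G 𝒢 F c hconj ⟨L.1, L.2⟩ (res (hc.1.trans hc.2) (c x H a)))
          else 0)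
        = ∑ x ∈ T, if he : L.1 = conjS x H then
            (Nat.card L.1 : ℤ) •
              brkL R G 𝒢 F c hconj ⟨L.1, L.2⟩ (res (le_of_eq he) (c x H a))
          else 0 := by
      intro L
      rw [Finset.sum_comm]
      exact Finset.sum_congr rfl fun x _ => step2 x L
    simp only [stepA]
    rw [Finset.sum_comm]
    -- Step 3: for each x, the sum over L collapses to L = conjS x H
    have step3 : ∀ x : G,
        (∑ L : 𝒢, if he : L.1 = conjS x H then
            (Nat.card L.1 : ℤ) •
              brkL R G 𝒢 F c hconj ⟨L.1, L.2⟩ (res (le_of_eq he) (c x H a))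
          else 0)
        = (Nat.card H : ℤ) • brkL R G 𝒢 F c hconj ⟨H, hH⟩ a := by
      intro x
      rw [Finset.sum_eq_single (⟨conjS x H, hconj x H hH⟩ : 𝒢)]
      · rw [dif_pos rfl]
        have : res (le_of_eq (rfl : conjS x H = conjS x H)) (c x H a) = c x H a :=
          hres_refl _ _
        rw [this, card_conjS, ← brk_eq_brkL R G 𝒢 F c hconj (conjS x H) (hconj x H hH),
          brk_conj, brk_eq_brkL]
      · intro L _ hL
        rw [dif_neg (fun he => hL (Subtype.ext he))]
      · intro h
        exact absurd (Finset.mem_univ _) h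
    simp only [step3, Finset.sum_const, hTcard, ← Nat.cast_smul_eq_nsmul ℤ, smul_smul,
      ← Nat.cast_mul, ← Subgroup.card_eq_card_quotient_mul_card_subgroup H]
  intro z
  obtain ⟨y, rfl⟩ := Submodule.Quotient.mk_surjective _ z
  refine DirectSum.induction_on y ?_ ?_ ?_
  · simp
  · intro i a
    rw [← DirectSum.lof_eq_of R]
    exact key i.1 i.2 a
  · intro y1 y2 h1 h2
    rw [Submodule.Quotient.mk_add, map_add, map_add, h1, h2, smul_add]


end
end
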